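/- In the setting of two bounded closed Hilbert complexes related by morphisms—real Hilbert spaces W⁰, W¹, W² with continuous d⁰ : W⁰ → W¹, d¹ : W¹ → W², d¹ ∘ d⁰ = 0, closed ranges; real Hilbert spaces Wₕ⁰, Wₕ¹, Wₕ² with continuous dₕ⁰, dₕ¹, dₕ¹ ∘ dₕ⁰ = 0, closed ranges; continuous injective iᵏ : Wₕᵏ → Wᵏ and continuous πᵏ : Wᵏ → Wₕᵏ with πᵏ ∘ iᵏ = id, d⁰ ∘ i⁰ = i¹ ∘ dₕ⁰, d¹ ∘ i¹ = i² ∘ dₕ¹, dₕ⁰ ∘ π⁰ = π¹ ∘ d⁰, dₕ¹ ∘ π¹ = π² ∘ d¹—set Jᵏ := (iᵏ)* ∘ iᵏ, Hₕ := ker dₕ¹ ∩ (range dₕ⁰)^⊥, and Hₕ' := { z ∈ ker dₕ¹ : ⟪i¹ z, i¹ b⟫ = 0 for all b ∈ range dₕ⁰ }. Then there exists C > 0 such that: for any f ∈ W¹, fₕ ∈ Wₕ¹, any (σₕ, uₕ, pₕ) ∈ Wₕ⁰ × Wₕ¹ × Hₕ satisfying ⟪σₕ, τ⟫ − ⟪uₕ,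 dₕ⁰τ⟫ = 0 for all τ ∈ Wₕ⁰, ⟪dₕ⁰σₕ, v⟫ + ⟪dₕ¹uₕ, dₕ¹v⟫ + ⟪pₕ, v⟫ = ⟪fₕ, v⟫ for all v ∈ Wₕ¹, and ⟪uₕ, q⟫ = 0 for all q ∈ Hₕ, and any (σₕ', uₕ', pₕ') ∈ Wₕ⁰ × Wₕ¹ × Hₕ' satisfying ⟪J⁰σₕ', τ⟫ − ⟪J¹uₕ', dₕ⁰τ⟫ = 0 for all τ ∈ Wₕ⁰, ⟪J¹(dₕ⁰σₕ'), v⟫ + ⟪J²(dₕ¹uₕ'), dₕ¹v⟫ + ⟪J¹pₕ', v⟫ = ⟪f, i¹ v⟫ for all v ∈ Wₕ¹, and ⟪J¹uₕ', q'⟫ = 0 for all q' ∈ Hₕ', one has ‖σₕ − σₕ'‖_V + ‖uₕ − uₕ'‖_V + ‖pₕ − pₕ'‖ ≤ C · ( ‖fₕ − (i¹)* f‖ + M · ‖f‖ ), where M := max(‖id − J⁰‖, ‖id − J¹‖, ‖id − J²‖) and ‖x‖_V denotes the discrete graph norms (‖x‖² + ‖dₕ x‖²)^{1/2}. -/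

import Mathlib

open RealInnerProductSpace ContinuousLinearMap

private lemma le_of_sq_le_mul {a c : ℝ} (ha : 0 ≤ a) (hc : 0 ≤ c) (h : a ^ 2 ≤ c * a) :
    a ≤ c := by
  rcases eq_or_lt_of_le ha with h0 | h0
  · simpa [← h0] using hc
  · nlinarith

private lemma quad_bound {S A B ε : ℝ} (hS : 0 ≤ S) (hA : 0 ≤ A) (hB : 0 ≤ B) (hε : 0 ≤ ε)
    (h : S ^ 2 ≤ A * ε * S + B * ε ^ 2) : S ≤ (A + B + 1) * ε := by
  nlinarith [sq_nonneg (S - (A + B + 1) * ε), mul_nonneg hA hε, mul_nonneg hB hε,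
    mul_nonneg (mul_nonneg hA hε) hS, sq_nonneg ε, mul_nonneg hε hS]

private lemma sqrt_sq_add_sq_le {a b : ℝ} (ha : 0 ≤ a) (hb : 0 ≤ b) :
    Real.sqrt (a ^ 2 + b ^ 2) ≤ a + b := by
  rw [show a ^ 2 + b ^ 2 = (a + b) ^ 2 - 2 * (a * b) by ring]
  calc Real.sqrt ((a + b) ^ 2 - 2 * (a * b)) ≤ Real.sqrt ((a + b) ^ 2) := by
        apply Real.sqrt_le_sqrt; nlinarith [mul_nonneg ha hb]
    _ = a + b := Real.sqrt_sq (add_nonneg ha hb)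

private lemma exists_bounded_preimage {E F : Type*} [NormedAddCommGroup E] [NormedAddCommGroup F]
    [NormedSpace ℝ E] [NormedSpace ℝ F] [CompleteSpace E] [CompleteSpace F]
    (T : E →L[ℝ] F) (hT : IsClosed (LinearMap.range (T : E →ₗ[ℝ] F) : Set F)) :
    ∃ C > 0, ∀ y ∈ LinearMap.range (T : E →ₗ[ℝ] F), ∃ x, T x = y ∧ ‖x‖ ≤ C * ‖y‖ := by
  haveI : CompleteSpace (LinearMap.range (T : E →ₗ[ℝ] F)) := hT.completeSpace_coe
  let T' : E →L[ℝ] (LinearMap.range (T : E →ₗ[ℝ] F)) :=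
    T.codRestrict (LinearMap.range (T : E →ₗ[ℝ] F)) fun x => LinearMap.mem_range_self _ x
  have hsurj : Function.Surjective T' := by
    rintro ⟨y, x, rfl⟩
    exact ⟨x, rfl⟩
  obtain ⟨C, hCpos, hC⟩ := ContinuousLinearMap.exists_preimage_norm_le T' hsurj
  refine ⟨C, hCpos, fun y hy => ?_⟩
  obtain ⟨x, hx, hxn⟩ := hC ⟨y, hy⟩
  exact ⟨x, congrArg Subtype.val hx, by simpa using hxn⟩

/-- `J`-orthogonal projection onto a closed submodule, where the `J` inner product is
`⟪i ·, i ·⟫` for a bounded-below map `i`. -/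
private lemma exists_Jproj {E F : Type*} [NormedAddCommGroup E] [InnerProductSpace ℝ E]
    [CompleteSpace E] [NormedAddCommGroup F] [InnerProductSpace ℝ F] [CompleteSpace F]
    (i : E →L[ℝ] F) (c : ℝ) (hc : 0 ≤ c) (hlow : ∀ x, ‖x‖ ≤ c * ‖i x‖)
    (S : Submodule ℝ E) (hS : IsClosed (S : Set E)) (u : E) :
    ∃ z ∈ S, ∀ k ∈ S, ⟪i u - i z, i k⟫ = 0 := by
  have hanti : AntilipschitzWith ⟨c, hc⟩ i := i.antilipschitz_of_bound (by exact_mod_cast hlow)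
  have hce := hanti.isClosedEmbedding i.uniformContinuous
  set S' : Submodule ℝ F := S.map (i : E →ₗ[ℝ] F) with hS'
  have hS'c : IsClosed (S' : Set F) := by
    have h : (S' : Set F) = i '' (S : Set E) := by
      ext y; simp [hS', Submodule.mem_map]
    rw [h]
    exact hce.isClosedMap _ hS
  haveI : CompleteSpace S' := hS'c.completeSpace_coe
  obtain ⟨z, hzS, hz⟩ := (S'.orthogonalProjectionOnto (i u)).2
  refine ⟨z, hzS, fun k hk => ?_⟩
  have := Submodule.starProjection_inner_eq_zero (K := S') (i u) (i k) ⟨k, hk, rfl⟩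
  rw [Submodule.starProjection_apply, ← hz] at this
  exact this

set_option maxHeartbeats 2000000 in
private lemma modified_apriori
    {W0 W1 W2 Wh0 Wh1 Wh2 : Type*}
    [NormedAddCommGroup W0] [InnerProductSpace ℝ W0] [CompleteSpace W0]
    [NormedAddCommGroup W1] [InnerProductSpace ℝ W1] [CompleteSpace W1]
    [NormedAddCommGroup W2] [InnerProductSpace ℝ W2] [CompleteSpace W2]
    [NormedAddCommGroup Wh0] [InnerProductSpace ℝ Wh0] [CompleteSpace Wh0]
    [NormedAddCommGroup Wh1] [InnerProductSpace ℝ Wh1] [CompleteSpace Wh1]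
    [NormedAddCommGroup Wh2] [InnerProductSpace ℝ Wh2] [CompleteSpace Wh2]
    (dh0 : Wh0 →L[ℝ] Wh1) (dh1 : Wh1 →L[ℝ] Wh2)
    (hddh : ∀ x : Wh0, dh1 (dh0 x) = 0)
    (hBh0 : IsClosed (LinearMap.range (dh0 : Wh0 →ₗ[ℝ] Wh1) : Set Wh1))
    (hBh1 : IsClosed (LinearMap.range (dh1 : Wh1 →ₗ[ℝ] Wh2) : Set Wh2))
    (i0 : Wh0 →L[ℝ] W0) (i1 : Wh1 →L[ℝ] W1) (i2 : Wh2 →L[ℝ] W2)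
    (hinj1 : Function.Injective i1)
    (π0 : W0 →L[ℝ] Wh0) (π1 : W1 →L[ℝ] Wh1) (π2 : W2 →L[ℝ] Wh2)
    (hπi0 : ∀ x : Wh0, π0 (i0 x) = x)
    (hπi1 : ∀ x : Wh1, π1 (i1 x) = x)
    (hπi2 : ∀ x : Wh2, π2 (i2 x) = x) :
    ∃ CA > 0, ∀ (f : W1) (σ' : Wh0) (u' p' : Wh1),
      dh1 p' = 0 →
      (∀ b ∈ LinearMap.range (dh0 : Wh0 →ₗ[ℝ] Wh1), ⟪i1 p', i1 b⟫ = 0) →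
      (∀ τ : Wh0, ⟪i0 σ', i0 τ⟫ - ⟪i1 u', i1 (dh0 τ)⟫ = 0) →
      (∀ v : Wh1, ⟪i1 (dh0 σ'), i1 v⟫ + ⟪i2 (dh1 u'), i2 (dh1 v)⟫ + ⟪i1 p', i1 v⟫
        = ⟪f, i1 v⟫) →
      (∀ q' : Wh1, dh1 q' = 0 → (∀ b ∈ LinearMap.range (dh0 : Wh0 →ₗ[ℝ] Wh1), ⟪i1 q', i1 b⟫ = 0) →
        ⟪i1 u', i1 q'⟫ = 0) →
      ‖σ'‖ ≤ CA * ‖f‖ ∧ ‖dh0 σ'‖ ≤ CA * ‖f‖ ∧ ‖u'‖ ≤ CA * ‖f‖ ∧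
        ‖dh1 u'‖ ≤ CA * ‖f‖ ∧ ‖p'‖ ≤ CA * ‖f‖ ∧ ‖i1 u'‖ ≤ CA * ‖f‖ := by
  obtain ⟨C0, hC0, hP0⟩ := exists_bounded_preimage dh0 hBh0
  obtain ⟨C1, hC1, hP1⟩ := exists_bounded_preimage dh1 hBh1
  set K1 : ℝ := ‖i0‖ * C0 * ‖π1‖ with hK1def
  set K2 : ℝ := ‖i1‖ * C1 * ‖π2‖ with hK2def
  have hK1 : 0 ≤ K1 := by positivity
  have hK2 : 0 ≤ K2 := by positivity
  set K : ℝ := K1 + K2 + 1 with hKdef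
  have hK : 0 < K := by positivity
  set CA : ℝ := 1 + ‖π1‖ + ‖π0‖ * (2 * K) + ‖π2‖ * (2 * K)
      + ‖π1‖ * ((K1 + K2) * (2 * K)) + (K1 + K2) * (2 * K) with hCAdef
  have t1 : (0:ℝ) ≤ ‖π1‖ := norm_nonneg _
  have t2 : (0:ℝ) ≤ ‖π0‖ * (2 * K) := by positivity
  have t3 : (0:ℝ) ≤ ‖π2‖ * (2 * K) := by positivity
  have t4 : (0:ℝ) ≤ ‖π1‖ * ((K1 + K2) * (2 * K)) := by positivity
  have t5 : (0:ℝ) ≤ (K1 + K2) * (2 * K) := by positivity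
  have hCA : 0 < CA := by positivity
  refine ⟨CA, hCA, fun f σ' u' p' hp'ker hp'J ha hb hc' => ?_⟩
  have hF : (0:ℝ) ≤ ‖f‖ := norm_nonneg f
  have hlow0 : ∀ x : Wh0, ‖x‖ ≤ ‖π0‖ * ‖i0 x‖ := fun x => by
    conv_lhs => rw [← hπi0 x]
    exact π0.le_opNorm _
  have hlow1 : ∀ x : Wh1, ‖x‖ ≤ ‖π1‖ * ‖i1 x‖ := fun x => by
    conv_lhs => rw [← hπi1 x]
    exact π1.le_opNorm _
  have hlow2 : ∀ x : Wh2, ‖x‖ ≤ ‖π2‖ * ‖i2 x‖ := fun x => by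
    conv_lhs => rw [← hπi2 x]
    exact π2.le_opNorm _
  -- Step 3 : bound on ‖i1 (dh0 σ')‖
  have h3 : ‖i1 (dh0 σ')‖ ≤ ‖f‖ := by
    have hv := hb (dh0 σ')
    rw [hddh σ'] at hv
    rw [hp'J (dh0 σ') ⟨σ', rfl⟩] at hv
    simp only [map_zero, inner_zero_right, add_zero] at hv
    apply le_of_sq_le_mul (norm_nonneg _) hF
    rw [← real_inner_self_eq_norm_sq, hv]
    exact real_inner_le_norm f _
  -- Step 4 : bound on ‖i1 p'‖
  have h4 : ‖i1 p'‖ ≤ ‖f‖ := by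
    have hv := hb p'
    rw [hp'ker] at hv
    rw [real_inner_comm (i1 p') (i1 (dh0 σ')), hp'J (dh0 σ') ⟨σ', rfl⟩] at hv
    simp only [map_zero, inner_zero_right, add_zero, zero_add] at hv
    apply le_of_sq_le_mul (norm_nonneg _) hF
    rw [← real_inner_self_eq_norm_sq, hv]
    exact real_inner_le_norm f _
  -- Step 5 : Hodge-type decomposition of u' in the J inner product
  obtain ⟨z, hzker, hzorth⟩ := exists_Jproj i1 ‖π1‖ t1 hlow1
    (LinearMap.ker (dh1 : Wh1 →ₗ[ℝ] Wh2)) (ContinuousLinearMap.isClosed_ker dh1) u'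
  have hzker' : dh1 z = 0 := LinearMap.mem_ker.mp hzker
  obtain ⟨w, hwdef⟩ : ∃ w : Wh1, w = u' - z := ⟨_, rfl⟩
  have hiw : i1 w = i1 u' - i1 z := by rw [hwdef]; exact map_sub i1 u' z
  have hwort : ∀ k : Wh1, dh1 k = 0 → ⟪i1 w, i1 k⟫ = 0 := by
    intro k hk
    rw [hiw]
    exact hzorth k (LinearMap.mem_ker.mpr hk)
  have hwd : dh1 w = dh1 u' := by
    rw [hwdef, map_sub, hzker', sub_zero]
  -- bound on ‖i1 w‖
  have hw_le : ‖i1 w‖ ≤ K2 * ‖i2 (dh1 u')‖ := by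
    obtain ⟨w₁, hw₁, hw₁n⟩ := hP1 (dh1 w) ⟨w, rfl⟩
    have hker : dh1 (w - w₁) = 0 := by rw [map_sub, hw₁, sub_self]
    have h5 := hwort _ hker
    rw [map_sub, inner_sub_right] at h5
    apply le_of_sq_le_mul (norm_nonneg _) (by positivity)
    have e1 : ‖i1 w‖ ^ 2 = ⟪i1 w, i1 w₁⟫ := by
      rw [← real_inner_self_eq_norm_sq]; linarith
    have e11 : ‖i1 w₁‖ ≤ K2 * ‖i2 (dh1 u')‖ := by
      calc ‖i1 w₁‖ ≤ ‖i1‖ * ‖w₁‖ := i1.le_opNorm _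
        _ ≤ ‖i1‖ * (C1 * ‖dh1 w‖) := by
            exact mul_le_mul_of_nonneg_left hw₁n (norm_nonneg _)
        _ ≤ ‖i1‖ * (C1 * (‖π2‖ * ‖i2 (dh1 u')‖)) := by
            have e5 : ‖dh1 w‖ ≤ ‖π2‖ * ‖i2 (dh1 u')‖ := by rw [hwd]; exact hlow2 _
            apply mul_le_mul_of_nonneg_left _ (norm_nonneg (i1 : Wh1 →L[ℝ] W1))
            exact mul_le_mul_of_nonneg_left e5 (le_of_lt hC1)
        _ = K2 * ‖i2 (dh1 u')‖ := by rw [hK2def]; ring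
    calc ‖i1 w‖ ^ 2 = ⟪i1 w, i1 w₁⟫ := e1
      _ ≤ ‖i1 w‖ * ‖i1 w₁‖ := real_inner_le_norm _ _
      _ ≤ ‖i1 w‖ * (K2 * ‖i2 (dh1 u')‖) := mul_le_mul_of_nonneg_left e11 (norm_nonneg _)
      _ = K2 * ‖i2 (dh1 u')‖ * ‖i1 w‖ := by ring
  -- z lies in the range of dh0
  obtain ⟨b, hbB, hbo⟩ := exists_Jproj i1 ‖π1‖ t1 hlow1 (LinearMap.range (dh0 : Wh0 →ₗ[ℝ] Wh1)) hBh0 z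
  have hbker : dh1 b = 0 := by obtain ⟨a, rfl⟩ := hbB; exact hddh a
  obtain ⟨h, hhdef⟩ : ∃ h : Wh1, h = z - b := ⟨_, rfl⟩
  have hih : i1 h = i1 z - i1 b := by rw [hhdef]; exact map_sub i1 z b
  have hhker : dh1 h = 0 := by rw [hhdef, map_sub, hzker', hbker, sub_zero]
  have hhJ : ∀ bb ∈ LinearMap.range (dh0 : Wh0 →ₗ[ℝ] Wh1), ⟪i1 h, i1 bb⟫ = 0 := by
    intro bb hbb
    rw [hih]
    exact hbo bb hbb
  have hu'h : ⟪i1 u', i1 h⟫ = 0 := hc' h hhker hhJ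
  have hiu : i1 u' = i1 w + i1 z := by rw [hiw]; abel
  have hiz : i1 z = i1 b + i1 h := by rw [hih]; abel
  have hh0 : h = 0 := by
    have c1 : ⟪i1 w, i1 h⟫ = 0 := hwort h hhker
    have c2 : ⟪i1 h, i1 b⟫ = 0 := hhJ b hbB
    have c3 : ⟪i1 b, i1 h⟫ = 0 := by rw [real_inner_comm]; exact c2
    have : ⟪i1 h, i1 h⟫ = 0 := by
      have := hu'h
      rw [hiu, hiz, inner_add_left, inner_add_left, c1, c3] at this
      linarith
    have hzero : i1 h = 0 := inner_self_eq_zero.mp this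
    have : i1 h = i1 0 := by rw [map_zero]; exact hzero
    exact hinj1 this
  have hzb : z = b := by rw [← sub_eq_zero, ← hhdef]; exact hh0
  have hzB : z ∈ LinearMap.range (dh0 : Wh0 →ₗ[ℝ] Wh1) := hzb ▸ hbB
  -- bound on ‖i1 z‖
  have hz_le : ‖i1 z‖ ≤ K1 * ‖i0 σ'‖ := by
    obtain ⟨ρ, hρ, hρn⟩ := hP0 z hzB
    have ha' := ha ρ
    rw [hρ] at ha'
    have c1 : ⟪i1 w, i1 z⟫ = 0 := hwort z hzker'
    apply le_of_sq_le_mul (norm_nonneg _) (by positivity)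
    have e1 : ‖i1 z‖ ^ 2 = ⟪i0 σ', i0 ρ⟫ := by
      rw [← real_inner_self_eq_norm_sq]
      have h6 : ⟪i1 u', i1 z⟫ = ⟪i0 σ', i0 ρ⟫ := by linarith
      rw [hiu, inner_add_left, c1, zero_add] at h6
      exact h6
    have e3 : ‖i0 ρ‖ ≤ ‖i0‖ * (C0 * (‖π1‖ * ‖i1 z‖)) := by
      calc ‖i0 ρ‖ ≤ ‖i0‖ * ‖ρ‖ := i0.le_opNorm _
        _ ≤ ‖i0‖ * (C0 * ‖z‖) := mul_le_mul_of_nonneg_left hρn (norm_nonneg _)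
        _ ≤ ‖i0‖ * (C0 * (‖π1‖ * ‖i1 z‖)) := by
            apply mul_le_mul_of_nonneg_left _ (norm_nonneg (i0 : Wh0 →L[ℝ] W0))
            exact mul_le_mul_of_nonneg_left (hlow1 _) (le_of_lt hC0)
    calc ‖i1 z‖ ^ 2 = ⟪i0 σ', i0 ρ⟫ := e1
      _ ≤ ‖i0 σ'‖ * ‖i0 ρ‖ := real_inner_le_norm _ _
      _ ≤ ‖i0 σ'‖ * (‖i0‖ * (C0 * (‖π1‖ * ‖i1 z‖))) :=
          mul_le_mul_of_nonneg_left e3 (norm_nonneg _)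
      _ = K1 * ‖i0 σ'‖ * ‖i1 z‖ := by rw [hK1def]; ring
  have hu1 : ‖i1 u'‖ ≤ K1 * ‖i0 σ'‖ + K2 * ‖i2 (dh1 u')‖ := by
    calc ‖i1 u'‖ = ‖i1 w + i1 z‖ := by rw [← hiu]
      _ ≤ ‖i1 w‖ + ‖i1 z‖ := norm_add_le _ _
      _ ≤ K1 * ‖i0 σ'‖ + K2 * ‖i2 (dh1 u')‖ := by linarith
  -- Step 2 : energy identity
  set X : ℝ := ‖i0 σ'‖ with hXdef
  set Y : ℝ := ‖i2 (dh1 u')‖ with hYdef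
  have hX : 0 ≤ X := norm_nonneg _
  have hY : 0 ≤ Y := norm_nonneg _
  have hXY : X ^ 2 + Y ^ 2 ≤ ‖f‖ * (K1 * X + K2 * Y) := by
    have haσ := ha σ'
    have hbu := hb u'
    have hpu : ⟪i1 u', i1 p'⟫ = 0 := hc' p' hp'ker hp'J
    have hpu' : ⟪i1 p', i1 u'⟫ = 0 := by rw [real_inner_comm]; exact hpu
    rw [hpu'] at hbu
    have hcomm : ⟪i1 (dh0 σ'), i1 u'⟫ = ⟪i1 u', i1 (dh0 σ')⟫ := real_inner_comm _ _
    have hXi : ⟪i0 σ', i0 σ'⟫ = X ^ 2 := by rw [real_inner_self_eq_norm_sq]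
    have hYi : ⟪i2 (dh1 u'), i2 (dh1 u')⟫ = Y ^ 2 := by rw [real_inner_self_eq_norm_sq]
    have hfu : ⟪f, i1 u'⟫ ≤ ‖f‖ * ‖i1 u'‖ := real_inner_le_norm _ _
    have : X ^ 2 + Y ^ 2 ≤ ‖f‖ * ‖i1 u'‖ := by linarith
    calc X ^ 2 + Y ^ 2 ≤ ‖f‖ * ‖i1 u'‖ := this
      _ ≤ ‖f‖ * (K1 * X + K2 * Y) := by
          apply mul_le_mul_of_nonneg_left _ hF
          exact hu1
  have hSle : X + Y ≤ 2 * K * ‖f‖ := by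
    apply le_of_sq_le_mul (by positivity) (by positivity)
    have sl1 : (0:ℝ) ≤ (K - K1) * (‖f‖ * X) :=
      mul_nonneg (by rw [hKdef]; linarith) (mul_nonneg hF hX)
    have sl2 : (0:ℝ) ≤ (K - K2) * (‖f‖ * Y) :=
      mul_nonneg (by rw [hKdef]; linarith) (mul_nonneg hF hY)
    linarith only [hXY, sq_nonneg (X - Y), sl1, sl2]
  have hXle : X ≤ 2 * K * ‖f‖ := by linarith
  have hYle : Y ≤ 2 * K * ‖f‖ := by linarith
  have hu2 : ‖i1 u'‖ ≤ (K1 + K2) * (2 * K) * ‖f‖ := by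
    calc ‖i1 u'‖ ≤ K1 * X + K2 * Y := hu1
      _ ≤ (K1 + K2) * (2 * K) * ‖f‖ := by
          have q1 := mul_le_mul_of_nonneg_left hXle hK1
          have q2 := mul_le_mul_of_nonneg_left hYle hK2
          linarith only [q1, q2]
  refine ⟨?_, ?_, ?_, ?_, ?_, ?_⟩
  · calc ‖σ'‖ ≤ ‖π0‖ * X := hlow0 _
      _ ≤ ‖π0‖ * (2 * K) * ‖f‖ := by
          rw [mul_assoc]; exact mul_le_mul_of_nonneg_left hXle (norm_nonneg _)
      _ ≤ CA * ‖f‖ := by apply mul_le_mul_of_nonneg_right _ hF; rw [hCAdef]; linarith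
  · calc ‖dh0 σ'‖ ≤ ‖π1‖ * ‖i1 (dh0 σ')‖ := hlow1 _
      _ ≤ ‖π1‖ * ‖f‖ := mul_le_mul_of_nonneg_left h3 t1
      _ ≤ CA * ‖f‖ := by apply mul_le_mul_of_nonneg_right _ hF; rw [hCAdef]; linarith
  · calc ‖u'‖ ≤ ‖π1‖ * ‖i1 u'‖ := hlow1 _
      _ ≤ ‖π1‖ * ((K1 + K2) * (2 * K)) * ‖f‖ := by
          rw [mul_assoc, mul_assoc]
          apply mul_le_mul_of_nonneg_left _ t1
          rw [← mul_assoc]; exact hu2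
      _ ≤ CA * ‖f‖ := by apply mul_le_mul_of_nonneg_right _ hF; rw [hCAdef]; linarith
  · calc ‖dh1 u'‖ ≤ ‖π2‖ * Y := hlow2 _
      _ ≤ ‖π2‖ * (2 * K) * ‖f‖ := by
          rw [mul_assoc]; exact mul_le_mul_of_nonneg_left hYle (norm_nonneg _)
      _ ≤ CA * ‖f‖ := by apply mul_le_mul_of_nonneg_right _ hF; rw [hCAdef]; linarith
  · calc ‖p'‖ ≤ ‖π1‖ * ‖i1 p'‖ := hlow1 _
      _ ≤ ‖π1‖ * ‖f‖ := mul_le_mul_of_nonneg_left h4 t1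
      _ ≤ CA * ‖f‖ := by apply mul_le_mul_of_nonneg_right _ hF; rw [hCAdef]; linarith
  · calc ‖i1 u'‖ ≤ (K1 + K2) * (2 * K) * ‖f‖ := hu2
      _ ≤ CA * ‖f‖ := by apply mul_le_mul_of_nonneg_right _ hF; rw [hCAdef]; linarith

private lemma opdiff_bound {E F : Type*} [NormedAddCommGroup E] [InnerProductSpace ℝ E]
    [CompleteSpace E] [NormedAddCommGroup F] [InnerProductSpace ℝ F] [CompleteSpace F]
    (i : E →L[ℝ] F) (x : E) :
    ‖ContinuousLinearMap.adjoint i (i x) - x‖ ≤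
      ‖ContinuousLinearMap.id ℝ E - (ContinuousLinearMap.adjoint i).comp i‖ * ‖x‖ := by
  have h1 : ContinuousLinearMap.adjoint i (i x) - x =
      -((ContinuousLinearMap.id ℝ E - (ContinuousLinearMap.adjoint i).comp i) x) := by
    simp
  rw [h1, norm_neg]
  exact ContinuousLinearMap.le_opNorm _ _
set_option maxHeartbeats 4000000

/-- Variational-crime perturbation estimate: the discrete mixed Hodge-Laplacian
solution `(σₕ, uₕ, pₕ)` with data `fₕ` and the modified solution `(σₕ', uₕ', pₕ')`
posed with the pulled-back inner product `⟪J·,·⟫` and data `(i¹)* f` differ (in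
discrete graph norms) by at most `C (‖fₕ − (i¹)* f‖ + M ‖f‖)`, where
`M = max ‖id − Jᵏ‖`, `Jᵏ = (iᵏ)* ∘ iᵏ`. -/
theorem variational_crime_perturbation
    {W0 W1 W2 Wh0 Wh1 Wh2 : Type*}
    [NormedAddCommGroup W0] [InnerProductSpace ℝ W0] [CompleteSpace W0]
    [NormedAddCommGroup W1] [InnerProductSpace ℝ W1] [CompleteSpace W1]
    [NormedAddCommGroup W2] [InnerProductSpace ℝ W2] [CompleteSpace W2]
    [NormedAddCommGroup Wh0] [InnerProductSpace ℝ Wh0] [CompleteSpace Wh0]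
    [NormedAddCommGroup Wh1] [InnerProductSpace ℝ Wh1] [CompleteSpace Wh1]
    [NormedAddCommGroup Wh2] [InnerProductSpace ℝ Wh2] [CompleteSpace Wh2]
    (d0 : W0 →L[ℝ] W1) (d1 : W1 →L[ℝ] W2)
    (hdd : ∀ x : W0, d1 (d0 x) = 0)
    (hB0 : IsClosed (LinearMap.range (d0 : W0 →ₗ[ℝ] W1) : Set W1))
    (hB1 : IsClosed (LinearMap.range (d1 : W1 →ₗ[ℝ] W2) : Set W2))
    (dh0 : Wh0 →L[ℝ] Wh1) (dh1 : Wh1 →L[ℝ] Wh2)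
    (hddh : ∀ x : Wh0, dh1 (dh0 x) = 0)
    (hBh0 : IsClosed (LinearMap.range (dh0 : Wh0 →ₗ[ℝ] Wh1) : Set Wh1))
    (hBh1 : IsClosed (LinearMap.range (dh1 : Wh1 →ₗ[ℝ] Wh2) : Set Wh2))
    (i0 : Wh0 →L[ℝ] W0) (i1 : Wh1 →L[ℝ] W1) (i2 : Wh2 →L[ℝ] W2)
    (hinj0 : Function.Injective i0) (hinj1 : Function.Injective i1)
    (hinj2 : Function.Injective i2)
    (π0 : W0 →L[ℝ] Wh0) (π1 : W1 →L[ℝ] Wh1) (π2 : W2 →L[ℝ] Wh2)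
    (hπi0 : ∀ x : Wh0, π0 (i0 x) = x)
    (hπi1 : ∀ x : Wh1, π1 (i1 x) = x)
    (hπi2 : ∀ x : Wh2, π2 (i2 x) = x)
    (hid0 : ∀ x : Wh0, d0 (i0 x) = i1 (dh0 x))
    (hid1 : ∀ x : Wh1, d1 (i1 x) = i2 (dh1 x))
    (hπd0 : ∀ x : W0, dh0 (π0 x) = π1 (d0 x))
    (hπd1 : ∀ x : W1, dh1 (π1 x) = π2 (d1 x)) :
    ∃ C : ℝ, 0 < C ∧
      ∀ (f : W1) (fh : Wh1) (σh : Wh0) (uh ph : Wh1) (σh' : Wh0) (uh' ph' : Wh1),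
        -- (σh, uh, ph) solves the discrete mixed problem with data fh
        ph ∈ LinearMap.ker (dh1 : Wh1 →ₗ[ℝ] Wh2) ⊓ (LinearMap.range (dh0 : Wh0 →ₗ[ℝ] Wh1))ᗮ →
        (∀ τ : Wh0, ⟪σh, τ⟫ - ⟪uh, dh0 τ⟫ = 0) →
        (∀ v : Wh1, ⟪dh0 σh, v⟫ + ⟪dh1 uh, dh1 v⟫ + ⟪ph, v⟫ = ⟪fh, v⟫) →
        (∀ q ∈ LinearMap.ker (dh1 : Wh1 →ₗ[ℝ] Wh2) ⊓ (LinearMap.range (dh0 : Wh0 →ₗ[ℝ] Wh1))ᗮ, ⟪uh, q⟫ = 0) →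
        -- ph' lies in the modified harmonic space Hₕ'
        ph' ∈ LinearMap.ker (dh1 : Wh1 →ₗ[ℝ] Wh2) →
        (∀ b ∈ LinearMap.range (dh0 : Wh0 →ₗ[ℝ] Wh1), ⟪i1 ph', i1 b⟫ = 0) →
        -- (σh', uh', ph') solves the modified mixed problem with data (i¹)* f
        (∀ τ : Wh0, ⟪(adjoint i0) (i0 σh'), τ⟫ - ⟪(adjoint i1) (i1 uh'), dh0 τ⟫ = 0) →
        (∀ v : Wh1, ⟪(adjoint i1) (i1 (dh0 σh')), v⟫ + ⟪(adjoint i2) (i2 (dh1 uh')), dh1 v⟫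
            + ⟪(adjoint i1) (i1 ph'), v⟫ = ⟪f, i1 v⟫) →
        (∀ q' : Wh1, q' ∈ LinearMap.ker (dh1 : Wh1 →ₗ[ℝ] Wh2) →
          (∀ b ∈ LinearMap.range (dh0 : Wh0 →ₗ[ℝ] Wh1), ⟪i1 q', i1 b⟫ = 0) →
          ⟪(adjoint i1) (i1 uh'), q'⟫ = 0) →
        -- conclusion
        Real.sqrt (‖σh - σh'‖ ^ 2 + ‖dh0 (σh - σh')‖ ^ 2)
            + Real.sqrt (‖uh - uh'‖ ^ 2 + ‖dh1 (uh - uh')‖ ^ 2)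
            + ‖ph - ph'‖ ≤
          C * (‖fh - (adjoint i1) f‖ +
            max (max ‖ContinuousLinearMap.id ℝ Wh0 - (adjoint i0).comp i0‖
                     ‖ContinuousLinearMap.id ℝ Wh1 - (adjoint i1).comp i1‖)
                ‖ContinuousLinearMap.id ℝ Wh2 - (adjoint i2).comp i2‖ * ‖f‖) := by
  obtain ⟨CA, hCA, hApr⟩ := modified_apriori dh0 dh1 hddh hBh0 hBh1 i0 i1 i2 hinj1
    π0 π1 π2 hπi0 hπi1 hπi2
  obtain ⟨C0, hC0, hP0⟩ := exists_bounded_preimage dh0 hBh0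
  obtain ⟨C1, hC1, hP1⟩ := exists_bounded_preimage dh1 hBh1
  set M : ℝ := max (max ‖ContinuousLinearMap.id ℝ Wh0 - (adjoint i0).comp i0‖
      ‖ContinuousLinearMap.id ℝ Wh1 - (adjoint i1).comp i1‖)
      ‖ContinuousLinearMap.id ℝ Wh2 - (adjoint i2).comp i2‖ with hMdef
  have hM : 0 ≤ M := le_trans (norm_nonneg _) (le_max_right _ _)
  have hM0 : ‖ContinuousLinearMap.id ℝ Wh0 - (adjoint i0).comp i0‖ ≤ M :=
    le_trans (le_max_left _ _) (le_max_left _ _)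
  have hM1 : ‖ContinuousLinearMap.id ℝ Wh1 - (adjoint i1).comp i1‖ ≤ M :=
    le_trans (le_max_right _ _) (le_max_left _ _)
  have hM2 : ‖ContinuousLinearMap.id ℝ Wh2 - (adjoint i2).comp i2‖ ≤ M :=
    le_max_right _ _
  set Kc : ℝ := CA * ‖π1‖ ^ 2 + CA * (1 + ‖π1‖ ^ 2 * M) with hKcdef
  have hKc : 0 < Kc := by positivity
  set KG : ℝ := 1 + 3 * CA with hKGdef
  have hKG : 0 < KG := by positivity
  set Kpp : ℝ := C0 * CA + CA + Kc with hKppdef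
  have hKpp : 0 < Kpp := by positivity
  set A : ℝ := CA + KG * (C0 + C1) with hAdef
  have hA : 0 < A := by positivity
  set B : ℝ := KG * Kpp + CA * KG + Kc * KG with hBdef
  have hB : 0 < B := by positivity
  set SB : ℝ := 2 * A + 2 * B + 1 with hSBdef
  have hSB : 0 < SB := by positivity
  refine ⟨SB + KG + (C0 + C1 + 1) * SB + Kpp + KG + CA + 1, by positivity,
    fun f fh σh uh ph σh' uh' ph' hph hu1 hu2 hu3 hp'k hp'J hm1 hm2 hm3 => ?_⟩
  set ε : ℝ := ‖fh - (adjoint i1) f‖ + M * ‖f‖ with hεdef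
  have hδε : ‖fh - (adjoint i1) f‖ ≤ ε := by
    rw [hεdef]; linarith only [mul_nonneg hM (norm_nonneg f)]
  have hMFε : M * ‖f‖ ≤ ε := by
    rw [hεdef]; linarith only [norm_nonneg (fh - (adjoint i1) f)]
  have hε : 0 ≤ ε := le_trans (norm_nonneg _) hδε
  have hlow1 : ∀ x : Wh1, ‖x‖ ≤ ‖π1‖ * ‖i1 x‖ := fun x => by
    conv_lhs => rw [← hπi1 x]
    exact π1.le_opNorm _
  -- hypotheses in inner-product form
  have hm1' : ∀ τ : Wh0, ⟪i0 σh', i0 τ⟫ - ⟪i1 uh', i1 (dh0 τ)⟫ = 0 := fun τ => by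
    have := hm1 τ
    rwa [adjoint_inner_left, adjoint_inner_left] at this
  have hm2' : ∀ v : Wh1, ⟪i1 (dh0 σh'), i1 v⟫ + ⟪i2 (dh1 uh'), i2 (dh1 v)⟫
      + ⟪i1 ph', i1 v⟫ = ⟪f, i1 v⟫ := fun v => by
    have := hm2 v
    rwa [adjoint_inner_left, adjoint_inner_left, adjoint_inner_left] at this
  have hm3' : ∀ q' : Wh1, dh1 q' = 0 → (∀ b ∈ LinearMap.range (dh0 : Wh0 →ₗ[ℝ] Wh1), ⟪i1 q', i1 b⟫ = 0) →
      ⟪i1 uh', i1 q'⟫ = 0 := fun q' h1 h2 => by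
    have := hm3 q' (LinearMap.mem_ker.mpr h1) h2
    rwa [adjoint_inner_left] at this
  have hp'k' : dh1 ph' = 0 := LinearMap.mem_ker.mp hp'k
  obtain ⟨bσ, bdσ, bu, bdu, bp', biu⟩ := hApr f σh' uh' ph' hp'k' hp'J hm1' hm2' hm3'
  -- residual norm bounds
  have hr0n : ‖(adjoint i0) (i0 σh') - σh'‖ ≤ CA * ε := by
    calc ‖(adjoint i0) (i0 σh') - σh'‖ ≤ _ * ‖σh'‖ := opdiff_bound i0 σh'
      _ ≤ M * (CA * ‖f‖) := mul_le_mul hM0 bσ (norm_nonneg _) hM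
      _ = CA * (M * ‖f‖) := by ring
      _ ≤ CA * ε := mul_le_mul_of_nonneg_left hMFε (le_of_lt hCA)
  have hr1n : ‖(adjoint i1) (i1 uh') - uh'‖ ≤ CA * ε := by
    calc ‖(adjoint i1) (i1 uh') - uh'‖ ≤ _ * ‖uh'‖ := opdiff_bound i1 uh'
      _ ≤ M * (CA * ‖f‖) := mul_le_mul hM1 bu (norm_nonneg _) hM
      _ = CA * (M * ‖f‖) := by ring
      _ ≤ CA * ε := mul_le_mul_of_nonneg_left hMFε (le_of_lt hCA)
  have hr2n : ‖(adjoint i1) (i1 (dh0 σh')) - dh0 σh'‖ ≤ CA * ε := by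
    calc ‖(adjoint i1) (i1 (dh0 σh')) - dh0 σh'‖ ≤ _ * ‖dh0 σh'‖ := opdiff_bound i1 _
      _ ≤ M * (CA * ‖f‖) := mul_le_mul hM1 bdσ (norm_nonneg _) hM
      _ = CA * (M * ‖f‖) := by ring
      _ ≤ CA * ε := mul_le_mul_of_nonneg_left hMFε (le_of_lt hCA)
  have hr3n : ‖(adjoint i2) (i2 (dh1 uh')) - dh1 uh'‖ ≤ CA * ε := by
    calc ‖(adjoint i2) (i2 (dh1 uh')) - dh1 uh'‖ ≤ _ * ‖dh1 uh'‖ := opdiff_bound i2 _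
      _ ≤ M * (CA * ‖f‖) := mul_le_mul hM2 bdu (norm_nonneg _) hM
      _ = CA * (M * ‖f‖) := by ring
      _ ≤ CA * ε := mul_le_mul_of_nonneg_left hMFε (le_of_lt hCA)
  have hr4n : ‖(adjoint i1) (i1 ph') - ph'‖ ≤ CA * ε := by
    calc ‖(adjoint i1) (i1 ph') - ph'‖ ≤ _ * ‖ph'‖ := opdiff_bound i1 _
      _ ≤ M * (CA * ‖f‖) := mul_le_mul hM1 bp' (norm_nonneg _) hM
      _ = CA * (M * ‖f‖) := by ring
      _ ≤ CA * ε := mul_le_mul_of_nonneg_left hMFε (le_of_lt hCA)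
  -- difference fields
  obtain ⟨e0, he0⟩ : ∃ e : Wh0, e = σh - σh' := ⟨_, rfl⟩
  obtain ⟨e1, he1⟩ : ∃ e : Wh1, e = uh - uh' := ⟨_, rfl⟩
  have hEa : ∀ τ : Wh0, ⟪e0, τ⟫ - ⟪e1, dh0 τ⟫
      = ⟪(adjoint i0) (i0 σh') - σh', τ⟫ - ⟪(adjoint i1) (i1 uh') - uh', dh0 τ⟫ := by
    intro τ
    have h1 := hu1 τ
    have h2 := hm1 τ
    rw [he0, he1]
    simp only [inner_sub_left]
    linarith
  -- orthogonal projection of ph' onto the range of dh0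
  obtain ⟨bp, hbpB, hbpo⟩ := exists_Jproj (ContinuousLinearMap.id ℝ Wh1) 1 zero_le_one
    (fun x => by simp) (LinearMap.range (dh0 : Wh0 →ₗ[ℝ] Wh1)) hBh0 ph'
  have hbpo' : ∀ k ∈ LinearMap.range (dh0 : Wh0 →ₗ[ℝ] Wh1), ⟪ph' - bp, k⟫ = 0 := fun k hk => by
    have := hbpo k hk
    simpa using this
  have hdbp : dh1 bp = 0 := by obtain ⟨a, rfl⟩ := hbpB; exact hddh a
  have hbpn : ‖bp‖ ≤ CA * ε := by
    have h1 := hbpo' bp hbpB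
    rw [inner_sub_left] at h1
    apply le_of_sq_le_mul (norm_nonneg _) (by positivity)
    have h3 : ⟪(adjoint i1) (i1 ph'), bp⟫ = 0 := by
      rw [adjoint_inner_left]
      exact hp'J bp hbpB
    have h4 : ‖bp‖ ^ 2 = ⟪ph', bp⟫ := by rw [← real_inner_self_eq_norm_sq]; linarith
    have h5 : ⟪ph' - (adjoint i1) (i1 ph'), bp⟫ ≤ ‖ph' - (adjoint i1) (i1 ph')‖ * ‖bp‖ :=
      real_inner_le_norm _ _
    rw [inner_sub_left, h3, sub_zero] at h5
    calc ‖bp‖ ^ 2 = ⟪ph', bp⟫ := h4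
      _ ≤ ‖ph' - (adjoint i1) (i1 ph')‖ * ‖bp‖ := h5
      _ ≤ (CA * ε) * ‖bp‖ := by
          apply mul_le_mul_of_nonneg_right _ (norm_nonneg _)
          rw [norm_sub_rev]
          exact hr4n
  -- corrected harmonic part
  obtain ⟨p, hpdef⟩ : ∃ p : Wh1, p = ph - (ph' - bp) := ⟨_, rfl⟩
  have hqHh : ph' - bp ∈ LinearMap.ker (dh1 : Wh1 →ₗ[ℝ] Wh2) ⊓ (LinearMap.range (dh0 : Wh0 →ₗ[ℝ] Wh1))ᗮ := by
    refine Submodule.mem_inf.mpr ⟨LinearMap.mem_ker.mpr ?_,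
      (Submodule.mem_orthogonal _ _).mpr ?_⟩
    · rw [map_sub, ContinuousLinearMap.coe_coe, hp'k', hdbp, sub_zero]
    · intro u hu
      rw [real_inner_comm]
      exact hbpo' u hu
  have hpHh : p ∈ LinearMap.ker (dh1 : Wh1 →ₗ[ℝ] Wh2) ⊓ (LinearMap.range (dh0 : Wh0 →ₗ[ℝ] Wh1))ᗮ := by
    rw [hpdef]; exact Submodule.sub_mem _ hph hqHh
  have hpk : dh1 p = 0 := LinearMap.mem_ker.mp (Submodule.mem_inf.mp hpHh).1
  have hpo : ∀ u ∈ LinearMap.range (dh0 : Wh0 →ₗ[ℝ] Wh1), ⟪u, p⟫ = 0 := fun u hu =>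
    (Submodule.mem_orthogonal _ _).mp (Submodule.mem_inf.mp hpHh).2 u hu
  -- perturbed data for the difference system
  obtain ⟨G, hGdef⟩ : ∃ g : Wh1, g = (fh - (adjoint i1) f)
      + ((adjoint i1) (i1 (dh0 σh')) - dh0 σh') + ((adjoint i1) (i1 ph') - ph') + bp :=
    ⟨_, rfl⟩
  have hGn : ‖G‖ ≤ KG * ε := by
    rw [hGdef]
    have n1 := norm_add_le ((fh - (adjoint i1) f)
      + ((adjoint i1) (i1 (dh0 σh')) - dh0 σh') + ((adjoint i1) (i1 ph') - ph')) bp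
    have n2 := norm_add_le ((fh - (adjoint i1) f)
      + ((adjoint i1) (i1 (dh0 σh')) - dh0 σh')) ((adjoint i1) (i1 ph') - ph')
    have n3 := norm_add_le (fh - (adjoint i1) f) ((adjoint i1) (i1 (dh0 σh')) - dh0 σh')
    rw [hKGdef]
    linarith
  have hEb : ∀ v : Wh1, ⟪dh0 e0, v⟫ + ⟪dh1 e1, dh1 v⟫ + ⟪p, v⟫
      = ⟪G, v⟫ + ⟪(adjoint i2) (i2 (dh1 uh')) - dh1 uh', dh1 v⟫ := by
    intro v
    have h1 := hu2 v
    have h2 := hm2 v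
    rw [← adjoint_inner_left i1 v f] at h2
    rw [he0, he1, hGdef, hpdef]
    simp only [map_sub, inner_sub_left, inner_add_left]
    linarith
  -- stability: control of dh0 e0 and of p
  have hde0 : ‖dh0 e0‖ ≤ KG * ε := by
    have h1 := hEb (dh0 e0)
    rw [hddh e0] at h1
    simp only [inner_zero_right] at h1
    have h2 : ⟪p, dh0 e0⟫ = 0 := by
      rw [real_inner_comm]
      exact hpo _ ⟨e0, rfl⟩
    rw [h2] at h1
    apply le_of_sq_le_mul (norm_nonneg _) (by positivity)
    rw [← real_inner_self_eq_norm_sq]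
    calc ⟪dh0 e0, dh0 e0⟫ = ⟪G, dh0 e0⟫ := by linarith
      _ ≤ ‖G‖ * ‖dh0 e0‖ := real_inner_le_norm _ _
      _ ≤ (KG * ε) * ‖dh0 e0‖ := mul_le_mul_of_nonneg_right hGn (norm_nonneg _)
  have hpn : ‖p‖ ≤ KG * ε := by
    have h1 := hEb p
    rw [hpk] at h1
    simp only [inner_zero_right] at h1
    have h2 : ⟪dh0 e0, p⟫ = 0 := hpo _ ⟨e0, rfl⟩
    rw [h2] at h1
    apply le_of_sq_le_mul (norm_nonneg _) (by positivity)
    rw [← real_inner_self_eq_norm_sq]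
    calc ⟪p, p⟫ = ⟪G, p⟫ := by linarith
      _ ≤ ‖G‖ * ‖p‖ := real_inner_le_norm _ _
      _ ≤ (KG * ε) * ‖p‖ := mul_le_mul_of_nonneg_right hGn (norm_nonneg _)
  -- near-orthogonality of uh' to the discrete harmonic space
  have hEc : ∀ q : Wh1, q ∈ LinearMap.ker (dh1 : Wh1 →ₗ[ℝ] Wh2) ⊓ (LinearMap.range (dh0 : Wh0 →ₗ[ℝ] Wh1))ᗮ →
      |⟪uh', q⟫| ≤ Kc * ε * ‖q‖ := by
    intro q hq
    have hqk : dh1 q = 0 := LinearMap.mem_ker.mp (Submodule.mem_inf.mp hq).1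
    have hqo : ∀ u ∈ LinearMap.range (dh0 : Wh0 →ₗ[ℝ] Wh1), ⟪u, q⟫ = 0 := fun u hu =>
      (Submodule.mem_orthogonal _ _).mp (Submodule.mem_inf.mp hq).2 u hu
    obtain ⟨b, hbB, hbo⟩ := exists_Jproj i1 ‖π1‖ (norm_nonneg _) hlow1
      (LinearMap.range (dh0 : Wh0 →ₗ[ℝ] Wh1)) hBh0 q
    have hdb : dh1 b = 0 := by obtain ⟨a, rfl⟩ := hbB; exact hddh a
    have hq'k : dh1 (q - b) = 0 := by rw [map_sub, hqk, hdb, sub_zero]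
    have hq'J : ∀ bb ∈ LinearMap.range (dh0 : Wh0 →ₗ[ℝ] Wh1), ⟪i1 (q - b), i1 bb⟫ = 0 := fun bb hbb => by
      rw [map_sub]
      exact hbo bb hbb
    have huq' : ⟪i1 uh', i1 (q - b)⟫ = 0 := hm3' _ hq'k hq'J
    have hbn : ‖b‖ ≤ ‖π1‖ ^ 2 * M * ‖q‖ := by
      have h1 := hbo b hbB
      rw [inner_sub_left] at h1
      have hib : ‖i1 b‖ ≤ ‖π1‖ * (M * ‖q‖) := by
        apply le_of_sq_le_mul (norm_nonneg _) (by positivity)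
        have h2 : ⟪i1 q, i1 b⟫ = ⟪(adjoint i1) (i1 q), b⟫ :=
          (adjoint_inner_left i1 b (i1 q)).symm
        have h3 : ⟪q, b⟫ = 0 := by
          rw [real_inner_comm]
          exact hqo b hbB
        have h4 : ⟪(adjoint i1) (i1 q) - q, b⟫ ≤ ‖(adjoint i1) (i1 q) - q‖ * ‖b‖ :=
          real_inner_le_norm _ _
        rw [inner_sub_left, h3, sub_zero] at h4
        have h5 : ‖(adjoint i1) (i1 q) - q‖ ≤ M * ‖q‖ :=
          le_trans (opdiff_bound i1 q) (mul_le_mul_of_nonneg_right hM1 (norm_nonneg _))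
        calc ‖i1 b‖ ^ 2 = ⟪i1 q, i1 b⟫ := by rw [← real_inner_self_eq_norm_sq]; linarith
          _ = ⟪(adjoint i1) (i1 q), b⟫ := h2
          _ ≤ ‖(adjoint i1) (i1 q) - q‖ * ‖b‖ := h4
          _ ≤ (M * ‖q‖) * ‖b‖ := mul_le_mul_of_nonneg_right h5 (norm_nonneg _)
          _ ≤ (M * ‖q‖) * (‖π1‖ * ‖i1 b‖) :=
              mul_le_mul_of_nonneg_left (hlow1 b) (by positivity)
          _ = ‖π1‖ * (M * ‖q‖) * ‖i1 b‖ := by ring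
      calc ‖b‖ ≤ ‖π1‖ * ‖i1 b‖ := hlow1 b
        _ ≤ ‖π1‖ * (‖π1‖ * (M * ‖q‖)) := mul_le_mul_of_nonneg_left hib (norm_nonneg _)
        _ = ‖π1‖ ^ 2 * M * ‖q‖ := by ring
    have hsplit : ⟪uh', q⟫ = ⟪uh', b⟫ + ⟪uh' - (adjoint i1) (i1 uh'), q - b⟫ := by
      have h6 : ⟪(adjoint i1) (i1 uh'), q - b⟫ = 0 := by
        rw [adjoint_inner_left]
        exact huq'
      have h7 : ⟪uh', q - b⟫ = ⟪uh' - (adjoint i1) (i1 uh'), q - b⟫ := by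
        rw [inner_sub_left, h6, sub_zero]
      rw [inner_sub_right] at h7
      linarith
    have habs1 : |⟪uh', b⟫| ≤ CA * ‖π1‖ ^ 2 * ε * ‖q‖ := by
      calc |⟪uh', b⟫| ≤ ‖uh'‖ * ‖b‖ := abs_real_inner_le_norm _ _
        _ ≤ (CA * ‖f‖) * (‖π1‖ ^ 2 * M * ‖q‖) :=
            mul_le_mul bu hbn (norm_nonneg _) (by positivity)
        _ = CA * ‖π1‖ ^ 2 * (M * ‖f‖) * ‖q‖ := by ring
        _ ≤ CA * ‖π1‖ ^ 2 * ε * ‖q‖ := by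
            apply mul_le_mul_of_nonneg_right _ (norm_nonneg q)
            exact mul_le_mul_of_nonneg_left hMFε (by positivity)
    have habs2 : |⟪uh' - (adjoint i1) (i1 uh'), q - b⟫|
        ≤ CA * (1 + ‖π1‖ ^ 2 * M) * ε * ‖q‖ := by
      have h8 : ‖q - b‖ ≤ (1 + ‖π1‖ ^ 2 * M) * ‖q‖ := by
        calc ‖q - b‖ ≤ ‖q‖ + ‖b‖ := norm_sub_le _ _
          _ ≤ ‖q‖ + ‖π1‖ ^ 2 * M * ‖q‖ := by linarith
          _ = (1 + ‖π1‖ ^ 2 * M) * ‖q‖ := by ring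
      calc |⟪uh' - (adjoint i1) (i1 uh'), q - b⟫|
          ≤ ‖uh' - (adjoint i1) (i1 uh')‖ * ‖q - b‖ := abs_real_inner_le_norm _ _
        _ ≤ (CA * ε) * ((1 + ‖π1‖ ^ 2 * M) * ‖q‖) := by
            apply mul_le_mul _ h8 (norm_nonneg _) (by positivity)
            rw [norm_sub_rev]
            exact hr1n
        _ = CA * (1 + ‖π1‖ ^ 2 * M) * ε * ‖q‖ := by ring
    calc |⟪uh', q⟫| ≤ |⟪uh', b⟫| + |⟪uh' - (adjoint i1) (i1 uh'), q - b⟫| := by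
          rw [hsplit]
          exact abs_add_le _ _
      _ ≤ CA * ‖π1‖ ^ 2 * ε * ‖q‖ + CA * (1 + ‖π1‖ ^ 2 * M) * ε * ‖q‖ := by linarith
      _ = Kc * ε * ‖q‖ := by rw [hKcdef]; ring
  have hEc1 : ∀ q ∈ LinearMap.ker (dh1 : Wh1 →ₗ[ℝ] Wh2) ⊓ (LinearMap.range (dh0 : Wh0 →ₗ[ℝ] Wh1))ᗮ, ⟪e1, q⟫ = -⟪uh', q⟫ := by
    intro q hq
    rw [he1, inner_sub_left, hu3 q hq]
    ring
  -- Hodge decomposition of e1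
  obtain ⟨z, hzker, hzo⟩ := exists_Jproj (ContinuousLinearMap.id ℝ Wh1) 1 zero_le_one
    (fun x => by simp) (LinearMap.ker (dh1 : Wh1 →ₗ[ℝ] Wh2)) (ContinuousLinearMap.isClosed_ker dh1) e1
  have hzk : dh1 z = 0 := LinearMap.mem_ker.mp hzker
  have hzo' : ∀ k : Wh1, dh1 k = 0 → ⟪e1 - z, k⟫ = 0 := fun k hk => by
    have := hzo k (LinearMap.mem_ker.mpr hk)
    simpa using this
  have hwn : ‖e1 - z‖ ≤ C1 * ‖dh1 e1‖ := by
    have hd : dh1 (e1 - z) = dh1 e1 := by rw [map_sub, hzk, sub_zero]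
    obtain ⟨w₁, hw₁, hw₁n⟩ := hP1 (dh1 (e1 - z)) ⟨_, rfl⟩
    have hker : dh1 ((e1 - z) - w₁) = 0 := by rw [map_sub, hw₁, sub_self]
    have h5 := hzo' _ hker
    rw [inner_sub_right] at h5
    apply le_of_sq_le_mul (norm_nonneg _) (by positivity)
    calc ‖e1 - z‖ ^ 2 = ⟪e1 - z, w₁⟫ := by rw [← real_inner_self_eq_norm_sq]; linarith
      _ ≤ ‖e1 - z‖ * ‖w₁‖ := real_inner_le_norm _ _
      _ ≤ ‖e1 - z‖ * (C1 * ‖dh1 e1‖) := by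
          apply mul_le_mul_of_nonneg_left _ (norm_nonneg _)
          rw [← hd]
          exact hw₁n
      _ = C1 * ‖dh1 e1‖ * ‖e1 - z‖ := by ring
  obtain ⟨bz, hbzB, hbzo⟩ := exists_Jproj (ContinuousLinearMap.id ℝ Wh1) 1 zero_le_one
    (fun x => by simp) (LinearMap.range (dh0 : Wh0 →ₗ[ℝ] Wh1)) hBh0 z
  have hbzo' : ∀ k ∈ LinearMap.range (dh0 : Wh0 →ₗ[ℝ] Wh1), ⟪z - bz, k⟫ = 0 := fun k hk => by
    have := hbzo k hk
    simpa using this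
  have hdbz : dh1 bz = 0 := by obtain ⟨a, rfl⟩ := hbzB; exact hddh a
  have hhzHh : z - bz ∈ LinearMap.ker (dh1 : Wh1 →ₗ[ℝ] Wh2) ⊓ (LinearMap.range (dh0 : Wh0 →ₗ[ℝ] Wh1))ᗮ := by
    refine Submodule.mem_inf.mpr ⟨LinearMap.mem_ker.mpr ?_,
      (Submodule.mem_orthogonal _ _).mpr ?_⟩
    · rw [map_sub, ContinuousLinearMap.coe_coe, hzk, hdbz, sub_zero]
    · intro u hu
      rw [real_inner_comm]
      exact hbzo' u hu
  have hhzn : ‖z - bz‖ ≤ Kc * ε := by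
    have h1 : ⟪e1 - z, z - bz⟫ = 0 := hzo' _ (by rw [map_sub, hzk, hdbz, sub_zero])
    have h2 : ⟪z - bz, bz⟫ = 0 := hbzo' bz hbzB
    have a1 : ⟪e1 - z, z - bz⟫ = ⟪e1, z - bz⟫ - ⟪z, z - bz⟫ := inner_sub_left _ _ _
    have a2 : ⟪z - bz, z - bz⟫ = ⟪z, z - bz⟫ - ⟪bz, z - bz⟫ := inner_sub_left _ _ _
    have a3 : ⟪bz, z - bz⟫ = ⟪z - bz, bz⟫ := by rw [real_inner_comm]
    have a4 : ⟪z - bz, z - bz⟫ = ‖z - bz‖ ^ 2 := real_inner_self_eq_norm_sq _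
    have h4 := hEc1 _ hhzHh
    have h5 := hEc _ hhzHh
    apply le_of_sq_le_mul (norm_nonneg _) (by positivity)
    calc ‖z - bz‖ ^ 2 = ⟪e1, z - bz⟫ := by linarith
      _ = -⟪uh', z - bz⟫ := h4
      _ ≤ |⟪uh', z - bz⟫| := neg_le_abs _
      _ ≤ Kc * ε * ‖z - bz‖ := h5
  have hbzn : ‖bz‖ ≤ C0 * ‖e0‖ + (C0 * CA + CA) * ε := by
    obtain ⟨ρ, hρ, hρn⟩ := hP0 bz hbzB
    have h1 := hEa ρ
    rw [hρ] at h1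
    have h2 : ⟪e1 - z, bz⟫ = 0 := hzo' bz hdbz
    have h3 : ⟪z - bz, bz⟫ = 0 := hbzo' bz hbzB
    have a1 : ⟪e1 - z, bz⟫ = ⟪e1, bz⟫ - ⟪z, bz⟫ := inner_sub_left _ _ _
    have a2 : ⟪z - bz, bz⟫ = ⟪z, bz⟫ - ⟪bz, bz⟫ := inner_sub_left _ _ _
    have a4 : ⟪bz, bz⟫ = ‖bz‖ ^ 2 := real_inner_self_eq_norm_sq _
    have b1 : ⟪e0, ρ⟫ ≤ ‖e0‖ * ‖ρ‖ := real_inner_le_norm _ _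
    have b2 : -⟪(adjoint i0) (i0 σh') - σh', ρ⟫ ≤ (CA * ε) * ‖ρ‖ := by
      calc -⟪(adjoint i0) (i0 σh') - σh', ρ⟫
          ≤ |⟪(adjoint i0) (i0 σh') - σh', ρ⟫| := neg_le_abs _
        _ ≤ ‖(adjoint i0) (i0 σh') - σh'‖ * ‖ρ‖ := abs_real_inner_le_norm _ _
        _ ≤ (CA * ε) * ‖ρ‖ := mul_le_mul_of_nonneg_right hr0n (norm_nonneg _)
    have b3 : ⟪(adjoint i1) (i1 uh') - uh', bz⟫ ≤ (CA * ε) * ‖bz‖ :=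
      le_trans (real_inner_le_norm _ _) (mul_le_mul_of_nonneg_right hr1n (norm_nonneg _))
    apply le_of_sq_le_mul (norm_nonneg _) (by positivity)
    have heq : ‖bz‖ ^ 2 = ⟪e0, ρ⟫ - ⟪(adjoint i0) (i0 σh') - σh', ρ⟫
        + ⟪(adjoint i1) (i1 uh') - uh', bz⟫ := by
      linarith only [h1, h2, h3, a1, a2, a4]
    have d1 : ‖e0‖ * ‖ρ‖ ≤ ‖e0‖ * (C0 * ‖bz‖) :=
      mul_le_mul_of_nonneg_left hρn (norm_nonneg e0)
    have d2 : (CA * ε) * ‖ρ‖ ≤ (CA * ε) * (C0 * ‖bz‖) :=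
      mul_le_mul_of_nonneg_left hρn (by positivity)
    linarith only [heq, b1, b2, b3, d1, d2]
  have he1n : ‖e1‖ ≤ C1 * ‖dh1 e1‖ + C0 * ‖e0‖ + Kpp * ε := by
    have t0 : ‖e1‖ = ‖(e1 - z) + (z - bz) + bz‖ := by congr 1; abel
    have t1 := norm_add_le ((e1 - z) + (z - bz)) bz
    have t2 := norm_add_le (e1 - z) (z - bz)
    rw [hKppdef]
    rw [t0]
    linarith only [t1, t2, hwn, hhzn, hbzn]
  -- energy estimate
  have hXYineq : ‖e0‖ ^ 2 + ‖dh1 e1‖ ^ 2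
      ≤ A * ε * (‖e0‖ + ‖dh1 e1‖) + B * ε ^ 2 := by
    have h1 := hEa e0
    have h2 := hEb e1
    have hcm : ⟪dh0 e0, e1⟫ = ⟪e1, dh0 e0⟫ := real_inner_comm e1 (dh0 e0)
    have hXs : ⟪e0, e0⟫ = ‖e0‖ ^ 2 := real_inner_self_eq_norm_sq _
    have hYs : ⟪dh1 e1, dh1 e1⟫ = ‖dh1 e1‖ ^ 2 := real_inner_self_eq_norm_sq _
    have c1 : ⟪(adjoint i0) (i0 σh') - σh', e0⟫ ≤ (CA * ε) * ‖e0‖ :=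
      le_trans (real_inner_le_norm _ _) (mul_le_mul_of_nonneg_right hr0n (norm_nonneg _))
    have c2 : -⟪(adjoint i1) (i1 uh') - uh', dh0 e0⟫ ≤ (CA * ε) * (KG * ε) := by
      calc -⟪(adjoint i1) (i1 uh') - uh', dh0 e0⟫
          ≤ |⟪(adjoint i1) (i1 uh') - uh', dh0 e0⟫| := neg_le_abs _
        _ ≤ ‖(adjoint i1) (i1 uh') - uh'‖ * ‖dh0 e0‖ := abs_real_inner_le_norm _ _
        _ ≤ (CA * ε) * (KG * ε) :=
            mul_le_mul hr1n hde0 (norm_nonneg _) (by positivity)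
    have c3 : ⟪G, e1⟫ ≤ (KG * ε) * (C1 * ‖dh1 e1‖ + C0 * ‖e0‖ + Kpp * ε) := by
      calc ⟪G, e1⟫ ≤ ‖G‖ * ‖e1‖ := real_inner_le_norm _ _
        _ ≤ (KG * ε) * (C1 * ‖dh1 e1‖ + C0 * ‖e0‖ + Kpp * ε) :=
            mul_le_mul hGn he1n (norm_nonneg _) (by positivity)
    have c4 : ⟪(adjoint i2) (i2 (dh1 uh')) - dh1 uh', dh1 e1⟫ ≤ (CA * ε) * ‖dh1 e1‖ :=
      le_trans (real_inner_le_norm _ _) (mul_le_mul_of_nonneg_right hr3n (norm_nonneg _))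
    have c5 : -⟪p, e1⟫ ≤ Kc * ε * (KG * ε) := by
      have h3 : ⟪e1, p⟫ = -⟪uh', p⟫ := hEc1 p hpHh
      have h4 := hEc p hpHh
      have h5 : ⟪p, e1⟫ = ⟪e1, p⟫ := real_inner_comm e1 p
      calc -⟪p, e1⟫ = ⟪uh', p⟫ := by rw [h5, h3]; ring
        _ ≤ |⟪uh', p⟫| := le_abs_self _
        _ ≤ Kc * ε * ‖p‖ := h4
        _ ≤ Kc * ε * (KG * ε) := mul_le_mul_of_nonneg_left hpn (by positivity)
    have heq : ‖e0‖ ^ 2 + ‖dh1 e1‖ ^ 2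
        = ⟪(adjoint i0) (i0 σh') - σh', e0⟫ - ⟪(adjoint i1) (i1 uh') - uh', dh0 e0⟫
          - ⟪p, e1⟫ + ⟪G, e1⟫ + ⟪(adjoint i2) (i2 (dh1 uh')) - dh1 uh', dh1 e1⟫ := by
      linarith only [h1, h2, hcm, hXs, hYs]
    have sl1 : (0:ℝ) ≤ KG * ε * (C1 * ‖e0‖) := by positivity
    have sl2 : (0:ℝ) ≤ KG * ε * (C0 * ‖dh1 e1‖) := by positivity
    rw [hAdef, hBdef]
    linarith only [heq, c1, c2, c3, c4, c5, sl1, sl2]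
  have hS : ‖e0‖ + ‖dh1 e1‖ ≤ SB * ε := by
    rw [hSBdef]
    apply quad_bound (add_nonneg (norm_nonneg _) (norm_nonneg _)) (by positivity)
      (by positivity) hε
    linarith only [hXYineq, sq_nonneg (‖e0‖ - ‖dh1 e1‖)]
  have hXf : ‖e0‖ ≤ SB * ε := le_trans (le_add_of_nonneg_right (norm_nonneg _)) hS
  have hYf : ‖dh1 e1‖ ≤ SB * ε := le_trans (le_add_of_nonneg_left (norm_nonneg _)) hS
  have hppf : ‖ph - ph'‖ ≤ (KG + CA) * ε := by
    have hpe : ph - ph' = p - bp := by rw [hpdef]; abel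
    rw [hpe]
    calc ‖p - bp‖ ≤ ‖p‖ + ‖bp‖ := norm_sub_le _ _
      _ ≤ (KG + CA) * ε := by linarith only [hpn, hbpn]
  rw [← he0, ← he1]
  have s1 : Real.sqrt (‖e0‖ ^ 2 + ‖dh0 e0‖ ^ 2) ≤ ‖e0‖ + ‖dh0 e0‖ :=
    sqrt_sq_add_sq_le (norm_nonneg _) (norm_nonneg _)
  have s2 : Real.sqrt (‖e1‖ ^ 2 + ‖dh1 e1‖ ^ 2) ≤ ‖e1‖ + ‖dh1 e1‖ :=
    sqrt_sq_add_sq_le (norm_nonneg _) (norm_nonneg _)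
  have d1 : C1 * ‖dh1 e1‖ ≤ C1 * (SB * ε) := mul_le_mul_of_nonneg_left hYf hC1.le
  have d2 : C0 * ‖e0‖ ≤ C0 * (SB * ε) := mul_le_mul_of_nonneg_left hXf hC0.le
  linarith only [s1, s2, hde0, hXf, hYf, he1n, hppf, hε, d1, d2]
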